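/- Let φ_AB = |φ⟩⟨φ| be a pure density matrix on ℂ^{d_A} ⊗ ℂ^{d_B}, with reduced state ρ_B = Tr_A[φ_AB], and let γ_B be a positive definite density matrix on ℂ^{d_B}. Then J→(φ_AB) = S(ρ_B), and consequently the work of assistance satisfies β·W_a(φ_AB) = S(ρ_B ‖ γ_B) + S(ρ_B) for every β > 0. -/

import Mathlib

/-! For a pure state `|φ⟩⟨φ|`, measuring Alice in the computational basis leaves Bob in the pure
conditional states `φ(x, ·)`, so the average post-measurement entropy, which is nonnegative for
every POVM, vanishes and the supremum defining `J→` is attained there. Since the unnormalized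
branches `Tr_A[(Π_i ⊗ I) φ]` sum to `ρ_B`, the work sum of any POVM is `-Tr[ρ_B log γ_B]` minus
the same average entropy, so `W_a` is attained by the same measurement and
`β W_a = -Tr[ρ_B log γ_B] = S(ρ_B‖γ_B) + S(ρ_B)`. -/

open Matrix BigOperators
open scoped Kronecker ComplexOrder

noncomputable section

namespace AWD

/-- Matrix logarithm via the spectral decomposition, with the convention `log 0 = 0`
(`Real.log 0 = 0` in Mathlib); junk value `0` on non-Hermitian matrices. -/
noncomputable def matLog {n : Type*} [Fintype n] [DecidableEq n] (A : Matrix n n ℂ) :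
    Matrix n n ℂ :=
  if hA : A.IsHermitian then
    (hA.eigenvectorUnitary : Matrix n n ℂ) *
      Matrix.diagonal (fun i => (Real.log (hA.eigenvalues i) : ℂ)) *
      (star (hA.eigenvectorUnitary : Matrix n n ℂ))
  else 0

/-- von Neumann entropy `S(ρ) = −Tr[ρ log ρ]`. -/
noncomputable def vN {n : Type*} [Fintype n] [DecidableEq n] (ρ : Matrix n n ℂ) : ℝ :=
  - ((ρ * matLog ρ).trace).re

/-- Quantum relative entropy `S(ρ‖σ) = Tr[ρ log ρ] − Tr[ρ log σ]`. -/
noncomputable def relEnt {n : Type*} [Fintype n] [DecidableEq n] (ρ σ : Matrix n n ℂ) : ℝ :=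
  ((ρ * matLog ρ).trace).re - ((ρ * matLog σ).trace).re

/-- A density matrix: positive semidefinite with unit trace. -/
def IsDensityMatrix {n : Type*} [Fintype n] (ρ : Matrix n n ℂ) : Prop :=
  ρ.PosSemidef ∧ ρ.trace = 1

/-- Partial trace over the first (Alice's) tensor factor. -/
def ptraceA {a b : Type*} [Fintype a] (X : Matrix (a × b) (a × b) ℂ) : Matrix b b ℂ :=
  fun y y' => ∑ x : a, X (x, y) (x, y')

/-- Partial trace over the second (Bob's) tensor factor. -/
def ptraceB {a b : Type*} [Fintype b] (X : Matrix (a × b) (a × b) ℂ) : Matrix a a ℂ :=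
  fun x x' => ∑ y : b, X (x, y) (x', y)

/-- A POVM indexed by `ι` on system `a`. -/
structure POVM (ι a : Type*) [Fintype ι] [Fintype a] [DecidableEq a] where
  elem : ι → Matrix a a ℂ
  pos : ∀ i, (elem i).PosSemidef
  sum_eq : ∑ i, elem i = 1

variable {ι a b : Type*} [Fintype ι] [Fintype a] [DecidableEq a] [Fintype b] [DecidableEq b]

/-- Probability `p_i = Tr[(Π_i ⊗ I) ρ_AB]` of outcome `i`. -/
noncomputable def povmProb (P : POVM ι a) (ρ : Matrix (a × b) (a × b) ℂ) (i : ι) : ℝ :=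
  (((P.elem i ⊗ₖ (1 : Matrix b b ℂ)) * ρ).trace).re

/-- Post-measurement state `ρ̃_i = Tr_A[(Π_i ⊗ I) ρ_AB] / p_i` on Bob's side. -/
noncomputable def povmPost (P : POVM ι a) (ρ : Matrix (a × b) (a × b) ℂ) (i : ι) :
    Matrix b b ℂ :=
  (povmProb P ρ i)⁻¹ • ptraceA ((P.elem i ⊗ₖ (1 : Matrix b b ℂ)) * ρ)

/-- `Σ_{i : p_i > 0} p_i S(ρ̃_i‖γ_B)`. -/
noncomputable def workSum (P : POVM ι a) (ρ : Matrix (a × b) (a × b) ℂ)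
    (γB : Matrix b b ℂ) : ℝ :=
  ∑ i, if 0 < povmProb P ρ i then povmProb P ρ i * relEnt (povmPost P ρ i) γB else 0

/-- The work of assistance, a supremum over all POVMs on Alice's side. -/
noncomputable def Wa (ρ : Matrix (a × b) (a × b) ℂ) (γB : Matrix b b ℂ) (β : ℝ) : ℝ :=
  ⨆ (k : ℕ), ⨆ (P : POVM (Fin k) a), (1 / β) * workSum P ρ γB

/-- The Henderson–Vedral measure of classical correlations
`J→(ρ_AB) = sup_{POVM} [S(ρ_B) − Σ_{i : p_i>0} p_i S(ρ̃_i)]`. -/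
noncomputable def Jarrow (ρ : Matrix (a × b) (a × b) ℂ) : ℝ :=
  ⨆ (k : ℕ), ⨆ (P : POVM (Fin k) a),
    (vN (ptraceA ρ) -
      ∑ i, if 0 < povmProb P ρ i then povmProb P ρ i * vN (povmPost P ρ i) else 0)

end AWD

namespace AWD

section Spectral

variable {n : Type*} [Fintype n] [DecidableEq n]

lemma matLog_of_isHermitian {A : Matrix n n ℂ} (hA : A.IsHermitian) :
    matLog A = (hA.eigenvectorUnitary : Matrix n n ℂ) *
      diagonal (fun i => (Real.log (hA.eigenvalues i) : ℂ)) *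
      star (hA.eigenvectorUnitary : Matrix n n ℂ) :=
  dif_pos hA

lemma trace_mul_matLog {γ : Matrix n n ℂ} (hγ : γ.IsHermitian) (A : Matrix n n ℂ) :
    (A * matLog γ).trace = ∑ j, (star (hγ.eigenvectorUnitary : Matrix n n ℂ) * A *
      hγ.eigenvectorUnitary) j j * Real.log (hγ.eigenvalues j) := by
  rw [matLog_of_isHermitian hγ, ← Matrix.mul_assoc, ← Matrix.mul_assoc, trace_mul_cycle,
    ← Matrix.mul_assoc, Matrix.trace]
  simp only [Matrix.diag_apply, Matrix.mul_diagonal]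

lemma re_trace_mul_matLog_self {A : Matrix n n ℂ} (hA : A.IsHermitian) :
    ((A * matLog A).trace).re = ∑ i, hA.eigenvalues i * Real.log (hA.eigenvalues i) := by
  have hdiag := hA.conjStarAlgAut_star_eigenvectorUnitary
  rw [Unitary.conjStarAlgAut_star_apply] at hdiag
  rw [trace_mul_matLog hA, hdiag, Complex.re_sum]
  simp [← Complex.ofReal_mul]

lemma IsDensityMatrix.eigenvalues_le_one {ρ : Matrix n n ℂ} (hρ : IsDensityMatrix ρ) (i : n) :
    hρ.1.isHermitian.eigenvalues i ≤ 1 := by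
  have hsum : ∑ j, hρ.1.isHermitian.eigenvalues j = 1 := by
    have h := hρ.2
    rw [hρ.1.isHermitian.trace_eq_sum_eigenvalues, ← RCLike.ofReal_sum] at h
    exact RCLike.ofReal_injective (h.trans RCLike.ofReal_one.symm)
  exact hsum ▸ Finset.single_le_sum (fun j _ => hρ.1.eigenvalues_nonneg j) (Finset.mem_univ i)

lemma vN_nonneg {ρ : Matrix n n ℂ} (hρ : IsDensityMatrix ρ) : 0 ≤ vN ρ := by
  rw [vN, re_trace_mul_matLog_self hρ.1.isHermitian, neg_nonneg]
  exact Finset.sum_nonpos fun i _ => mul_nonpos_of_nonneg_of_nonpos (hρ.1.eigenvalues_nonneg i)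
    (Real.log_nonpos (hρ.1.eigenvalues_nonneg i) (hρ.eigenvalues_le_one i))

lemma vN_eq_zero_of_isIdempotentElem {A : Matrix n n ℂ} (hA : A.IsHermitian)
    (hAA : IsIdempotentElem A) : vN A = 0 := by
  rw [vN, re_trace_mul_matLog_self hA, neg_eq_zero]
  refine Finset.sum_eq_zero fun i _ => ?_
  rcases hAA.spectrum_subset ℝ (hA.eigenvalues_mem_spectrum_real i) with h | h <;>
    simp [Set.mem_singleton_iff.mp h]

lemma re_trace_mul_matLog_nonpos {A γ : Matrix n n ℂ} (hA : A.PosSemidef)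
    (hγ : IsDensityMatrix γ) : ((A * matLog γ).trace).re ≤ 0 := by
  have hconj := hA.conjTranspose_mul_mul_same (hγ.1.isHermitian.eigenvectorUnitary : Matrix n n ℂ)
  rw [← Matrix.star_eq_conjTranspose] at hconj
  rw [trace_mul_matLog hγ.1.isHermitian, Complex.re_sum]
  refine Finset.sum_nonpos fun j _ => ?_
  rw [Complex.re_mul_ofReal]
  exact mul_nonpos_of_nonneg_of_nonpos (Complex.nonneg_iff.mp hconj.diag_nonneg).1
    (Real.log_nonpos (hγ.1.eigenvalues_nonneg j) (hγ.eigenvalues_le_one j))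

end Spectral

lemma isIdempotentElem_vecMulVec_of_trace_eq_one {n : Type*} [Fintype n] {u v : n → ℂ}
    (h : (vecMulVec u v).trace = 1) : IsIdempotentElem (vecMulVec u v) := by
  rw [trace_vecMulVec, dotProduct_comm] at h
  rw [IsIdempotentElem, vecMulVec_mul_vecMulVec, h, one_smul]

section PartialTrace

variable {a b : Type*} [Fintype a]

lemma trace_ptraceA [Fintype b] (X : Matrix (a × b) (a × b) ℂ) : (ptraceA X).trace = X.trace := by
  simp only [Matrix.trace, Matrix.diag_apply, ptraceA, Fintype.sum_prod_type]
  exact Finset.sum_comm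

lemma ptraceA_sum {ι : Type*} [Fintype ι] (X : ι → Matrix (a × b) (a × b) ℂ) :
    ptraceA (∑ i, X i) = ∑ i, ptraceA (X i) := by
  ext y y'
  simp only [ptraceA, Matrix.sum_apply]
  exact Finset.sum_comm

end PartialTrace

section POVM

variable {ι a b : Type*} [Fintype ι] [Fintype a] [DecidableEq a] [Fintype b] [DecidableEq b]

lemma POVM.sum_ptraceA_kronecker_one_mul (P : POVM ι a) (ρ : Matrix (a × b) (a × b) ℂ) :
    ∑ i, ptraceA ((P.elem i ⊗ₖ (1 : Matrix b b ℂ)) * ρ) = ptraceA ρ := by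
  have hsum : ∑ i, P.elem i ⊗ₖ (1 : Matrix b b ℂ) = 1 := by
    rw [← one_kronecker_one, ← P.sum_eq]
    ext
    simp [kroneckerMap_apply, Matrix.sum_apply, Finset.sum_mul]
  rw [← ptraceA_sum, ← Finset.sum_mul, hsum, Matrix.one_mul]

def povmBranch (P : POVM ι a) (ρ : Matrix (a × b) (a × b) ℂ) (i : ι) : Matrix b b ℂ :=
  ptraceA ((P.elem i ⊗ₖ (1 : Matrix b b ℂ)) * ρ)

def avgPostEntropy (P : POVM ι a) (ρ : Matrix (a × b) (a × b) ℂ) : ℝ :=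
  ∑ i, if 0 < povmProb P ρ i then povmProb P ρ i * vN (povmPost P ρ i) else 0

lemma povmProb_eq_re_trace_povmBranch (P : POVM ι a) (ρ : Matrix (a × b) (a × b) ℂ) (i : ι) :
    povmProb P ρ i = (povmBranch P ρ i).trace.re := by
  rw [povmProb, povmBranch, trace_ptraceA]

variable {P : POVM ι a} {ρ : Matrix (a × b) (a × b) ℂ}

lemma trace_povmBranch_of_posSemidef {i : ι} (hσ : (povmBranch P ρ i).PosSemidef) :
    (povmBranch P ρ i).trace = povmProb P ρ i := by
  rw [povmProb_eq_re_trace_povmBranch]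
  exact Complex.ext rfl (Complex.nonneg_iff.mp hσ.trace_nonneg).2.symm

lemma povmBranch_eq_zero_of_not_pos {i : ι} (hσ : (povmBranch P ρ i).PosSemidef)
    (hp : ¬ 0 < povmProb P ρ i) : povmBranch P ρ i = 0 := by
  have hp0 : povmProb P ρ i = 0 := le_antisymm (not_lt.mp hp)
    ((povmProb_eq_re_trace_povmBranch P ρ i).symm ▸ (Complex.nonneg_iff.mp hσ.trace_nonneg).1)
  rw [← hσ.trace_eq_zero_iff, trace_povmBranch_of_posSemidef hσ, hp0, Complex.ofReal_zero]

lemma povmPost_isDensityMatrix {i : ι} (hσ : (povmBranch P ρ i).PosSemidef)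
    (hp : 0 < povmProb P ρ i) : IsDensityMatrix (povmPost P ρ i) := by
  refine ⟨hσ.smul (inv_nonneg.mpr hp.le), ?_⟩
  rw [povmPost, trace_smul, ← povmBranch, trace_povmBranch_of_posSemidef hσ, Complex.real_smul,
    ← Complex.ofReal_mul, inv_mul_cancel₀ hp.ne', Complex.ofReal_one]

lemma sum_povmProb_mul_re_trace_povmPost_mul (hσ : ∀ i, (povmBranch P ρ i).PosSemidef)
    (L : Matrix b b ℂ) :
    (∑ i, if 0 < povmProb P ρ i then povmProb P ρ i * ((povmPost P ρ i * L).trace).re else 0)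
      = ((ptraceA ρ * L).trace).re := by
  have hterm : ∀ i, (if 0 < povmProb P ρ i then
      povmProb P ρ i * ((povmPost P ρ i * L).trace).re else 0)
        = ((povmBranch P ρ i * L).trace).re := fun i => by
    by_cases hp : 0 < povmProb P ρ i
    · rw [if_pos hp, povmPost, Matrix.smul_mul, trace_smul, Complex.real_smul,
        Complex.re_ofReal_mul, ← mul_assoc, mul_inv_cancel₀ hp.ne', one_mul, povmBranch]
    · rw [if_neg hp, povmBranch_eq_zero_of_not_pos (hσ i) hp, Matrix.zero_mul, trace_zero,
        Complex.zero_re]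
  simp only [hterm, ← Complex.re_sum, ← trace_sum, ← Finset.sum_mul, povmBranch,
    P.sum_ptraceA_kronecker_one_mul]

lemma avgPostEntropy_nonneg (hσ : ∀ i, (povmBranch P ρ i).PosSemidef) :
    0 ≤ avgPostEntropy P ρ :=
  Finset.sum_nonneg fun i _ => by
    split_ifs with hp
    · exact mul_nonneg hp.le (vN_nonneg (povmPost_isDensityMatrix (hσ i) hp))
    · exact le_rfl

lemma workSum_eq (hσ : ∀ i, (povmBranch P ρ i).PosSemidef) (γ : Matrix b b ℂ) :
    workSum P ρ γ = -((ptraceA ρ * matLog γ).trace).re - avgPostEntropy P ρ := by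
  rw [← sum_povmProb_mul_re_trace_povmPost_mul hσ, avgPostEntropy, workSum, neg_sub_left,
    ← Finset.sum_add_distrib, ← Finset.sum_neg_distrib]
  refine Finset.sum_congr rfl fun i _ => ?_
  split_ifs
  · rw [relEnt, vN]
    ring
  · simp

end POVM

def POVM.std (a : Type*) [Fintype a] [DecidableEq a] : POVM a a where
  elem x := diagonal (Pi.single x 1)
  pos x := posSemidef_diagonal_iff.mpr fun y => by
    rcases eq_or_ne y x with rfl | h <;> simp [*]
  sum_eq := by
    ext y z
    rcases eq_or_ne y z with rfl | h <;> simp [Matrix.sum_apply, Pi.single_apply, *]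

lemma ptraceA_kronecker_one_mul_vecMulVec {a b : Type*} [Fintype a] [Fintype b] [DecidableEq b]
    (M : Matrix a a ℂ) (φ : a × b → ℂ) :
    ptraceA ((M ⊗ₖ (1 : Matrix b b ℂ)) * vecMulVec φ (star φ)) =
      ((of fun x y => φ (x, y))ᴴ * M * of fun x y => φ (x, y))ᵀ := by
  ext y y'
  simp only [ptraceA, transpose_apply, mul_apply, conjTranspose_apply, vecMulVec_apply,
    kroneckerMap_apply, one_apply, of_apply, Pi.star_apply, Fintype.sum_prod_type, mul_ite,
    mul_zero, mul_one, ite_mul, zero_mul, Finset.sum_ite_eq, Finset.mem_univ, if_true,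
    Finset.sum_mul]
  rw [Finset.sum_comm]
  exact Finset.sum_congr rfl fun _ _ => Finset.sum_congr rfl fun _ _ => by ring

section PureState

variable {ι a b : Type*} [Fintype ι] [Fintype a] [DecidableEq a] [Fintype b] [DecidableEq b]

lemma posSemidef_povmBranch_vecMulVec (P : POVM ι a) (φ : a × b → ℂ) (i : ι) :
    (povmBranch P (vecMulVec φ (star φ)) i).PosSemidef := by
  rw [povmBranch, ptraceA_kronecker_one_mul_vecMulVec]
  exact ((P.pos i).conjTranspose_mul_mul_same _).transpose

lemma isDensityMatrix_ptraceA_vecMulVec {φ : a × b → ℂ} (hφ : ∑ x, Complex.normSq (φ x) = 1) :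
    IsDensityMatrix (ptraceA (vecMulVec φ (star φ))) := by
  constructor
  · have h := ptraceA_kronecker_one_mul_vecMulVec (1 : Matrix a a ℂ) φ
    rw [one_kronecker_one, Matrix.one_mul] at h
    exact h ▸ (PosSemidef.one.conjTranspose_mul_mul_same _).transpose
  · rw [trace_ptraceA, trace_vecMulVec]
    simp [dotProduct, Complex.mul_conj, ← Complex.ofReal_sum, hφ]

lemma povmBranch_std_vecMulVec (φ : a × b → ℂ) (x : a) :
    povmBranch (POVM.std a) (vecMulVec φ (star φ)) x =
      vecMulVec (fun y => φ (x, y)) (star fun y => φ (x, y)) := by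
  rw [povmBranch, ptraceA_kronecker_one_mul_vecMulVec]
  ext y y'
  simp [POVM.std, mul_apply, diagonal_apply, Pi.single_apply, vecMulVec_apply, mul_comm]

lemma avgPostEntropy_std_vecMulVec (φ : a × b → ℂ) :
    avgPostEntropy (POVM.std a) (vecMulVec φ (star φ)) = 0 := by
  refine Finset.sum_eq_zero fun x _ => ?_
  split_ifs with hp
  · have hρ := povmPost_isDensityMatrix (posSemidef_povmBranch_vecMulVec _ φ x) hp
    have hrank : povmPost (POVM.std a) (vecMulVec φ (star φ)) x =
        vecMulVec ((povmProb (POVM.std a) (vecMulVec φ (star φ)) x)⁻¹ • fun y => φ (x, y))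
          (star fun y => φ (x, y)) := by
      rw [povmPost, ← povmBranch, povmBranch_std_vecMulVec, smul_vecMulVec]
    have hidem := isIdempotentElem_vecMulVec_of_trace_eq_one (hrank ▸ hρ.2)
    rw [vN_eq_zero_of_isIdempotentElem hρ.1.isHermitian (hrank ▸ hidem), mul_zero]
  · rfl

end PureState

-- `0 ≤ T` is needed because empty inner suprema, such as over `POVM (Fin 0) a`, are `0` in `ℝ`.
lemma iSup_iSup_eq_of_le_of_exists {κ : ℕ → Type*} {F : ∀ k, κ k → ℝ} {T : ℝ} (hT : 0 ≤ T)
    (hle : ∀ k x, F k x ≤ T) (hex : ∃ k x, F k x = T) : ⨆ k, ⨆ x, F k x = T := by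
  have hinner : ∀ k, ⨆ x, F k x ≤ T := fun k => Real.iSup_le (hle k) hT
  refine le_antisymm (Real.iSup_le hinner hT) ?_
  obtain ⟨k, x, rfl⟩ := hex
  exact (le_ciSup ⟨_, Set.forall_mem_range.mpr (hle k)⟩ x).trans
    (le_ciSup ⟨_, Set.forall_mem_range.mpr hinner⟩ k)

theorem assisted_work_distillation_stmt15_general {dA dB : ℕ}
    (φ : Fin dA × Fin dB → ℂ) (hφ : ∑ x, Complex.normSq (φ x) = 1)
    (φAB : Matrix (Fin dA × Fin dB) (Fin dA × Fin dB) ℂ)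
    (hφAB : φAB = Matrix.vecMulVec φ (star φ))
    (γB : Matrix (Fin dB) (Fin dB) ℂ) (hγB : IsDensityMatrix γB)
    (β : ℝ) (hβ : 0 < β) :
    Jarrow φAB = vN (ptraceA φAB) ∧
      β * Wa φAB γB β = relEnt (ptraceA φAB) γB + vN (ptraceA φAB) := by
  subst hφAB
  set ρ := vecMulVec φ (star φ)
  have hσ (k : ℕ) (P : POVM (Fin k) (Fin dA)) := posSemidef_povmBranch_vecMulVec P φ
  have hρB : IsDensityMatrix (ptraceA ρ) := isDensityMatrix_ptraceA_vecMulVec hφ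
  have hstd : avgPostEntropy (POVM.std (Fin dA)) ρ = 0 := avgPostEntropy_std_vecMulVec φ
  have hJ : Jarrow ρ = vN (ptraceA ρ) :=
    iSup_iSup_eq_of_le_of_exists (vN_nonneg hρB)
      (fun k P => sub_le_self _ (avgPostEntropy_nonneg (hσ k P)))
      ⟨dA, POVM.std _, sub_eq_self.mpr hstd⟩
  set E := -((ptraceA ρ * matLog γB).trace).re
  have hE : 0 ≤ E := neg_nonneg.mpr (re_trace_mul_matLog_nonpos hρB.1 hγB)
  have hW : Wa ρ γB β = 1 / β * E := by
    refine iSup_iSup_eq_of_le_of_exists (by positivity) (fun k P => ?_)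
      ⟨dA, POVM.std _, by rw [workSum_eq (hσ _ _), hstd, sub_zero]⟩
    rw [workSum_eq (hσ k P)]
    gcongr
    exact sub_le_self _ (avgPostEntropy_nonneg (hσ k P))
  refine ⟨hJ, ?_⟩
  rw [hW, relEnt, vN]
  field_simp
  ring

/-- for a pure state `φ_AB = |φ⟩⟨φ|`, the Henderson–Vedral measure equals the
local entropy, `J→(φ_AB) = S(ρ_B)`, and consequently
`β·W_a(φ_AB) = S(ρ_B‖γ_B) + S(ρ_B)` for every `β > 0`. -/
theorem assisted_work_distillation_stmt15 {dA dB : ℕ}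
    (φ : Fin dA × Fin dB → ℂ) (hφ : ∑ x, Complex.normSq (φ x) = 1)
    (φAB : Matrix (Fin dA × Fin dB) (Fin dA × Fin dB) ℂ)
    (hφAB : φAB = Matrix.vecMulVec φ (star φ))
    (γB : Matrix (Fin dB) (Fin dB) ℂ) (hγB : IsDensityMatrix γB) (hγBpd : γB.PosDef)
    (β : ℝ) (hβ : 0 < β) :
    Jarrow φAB = vN (ptraceA φAB) ∧
      β * Wa φAB γB β = relEnt (ptraceA φAB) γB + vN (ptraceA φAB) :=
  assisted_work_distillation_stmt15_general φ hφ φAB hφAB γB hγB β hβ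

end AWD
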